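/- For each cyclic permutation (i,j,k) of (1,2,3) and all signs ε, δ ∈ {+1,−1}: (K+1)(X_k · I_{ij}^ε P_k^δ) = 2δ I_{ij}^ε P_k^δ − (1/2)(δ + ε X₁X₂X₃). -/

import Mathlib

open scoped TensorProduct

noncomputable section

/-- The standard positive-definite quadratic form on `ℝ³`. -/
abbrev Q3 : QuadraticForm ℝ (Fin 3 → ℝ) :=
  QuadraticMap.weightedSumSquares ℝ (fun _ : Fin 3 => (1 : ℝ))

/-- The Clifford algebra of 3-dimensional Euclidean space. -/
abbrev Cl3 : Type := CliffordAlgebra Q3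

/-- The tensor product of two copies of `Cl3`, as ℝ-algebras. -/
abbrev A3 : Type := Cl3 ⊗[ℝ] Cl3

/-- The generators `e₁, e₂, e₃` (indexed by `Fin 3`). -/
def e (l : Fin 3) : Cl3 := CliffordAlgebra.ι Q3 (Pi.single l 1)

/-- `X_l := e_l ⊗ e_l`. -/
def X (l : Fin 3) : A3 := e l ⊗ₜ[ℝ] e l

/-- `w^i := (e_j e_k) ⊗ 1` for `(i,j,k)` a cyclic permutation of the indices. -/
def w (i : Fin 3) : A3 := (e (i + 1) * e (i + 2)) ⊗ₜ[ℝ] (1 : Cl3)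

/-- The (ℝ-linear) operators `J_l(U) := (1/2)(w^l U − U w^l)`. -/
def J (l : Fin 3) (U : A3) : A3 := (1/2 : ℝ) • (w l * U - U * w l)

/-- Kähler's total angular momentum operator `K+1`. -/
def K1 (U : A3) : A3 := J 0 U * w 0 + J 1 U * w 1 + J 2 U * w 2

/-- The idempotents `I_{ij}^ε := (1/2)(1 + ε X_i X_j)`. -/
def Iem (i j : Fin 3) (ε : ℝ) : A3 := (1/2 : ℝ) • ((1 : A3) + ε • (X i * X j))

/-- The idempotents `P_l^δ := (1/2)(1 + δ X_l)`. -/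
def P (l : Fin 3) (δ : ℝ) : A3 := (1/2 : ℝ) • ((1 : A3) + δ • X l)

/-!
The `X_l` commute pairwise and square to `1`, while `w^l` squares to `-1`, commutes with `X_l`
and anticommutes with `X_m` for `m ≠ l`. Hence if `U` commutes or anticommutes with each `w^l`,
`(K+1)(U) = ∑_l J_l(U) w^l` is `U` times the number of `w^l` it anticommutes with: `K+1` kills `1`
and `X₁X₂X₃` and doubles `X_m` and `X_m X_n`. Since `X_k P_k^δ = δ P_k^δ`, the identity follows by
expanding `I_{ij}^ε P_k^δ` in these monomials, the `X₁X₂X₃` terms cancelling because `δ² = 1`.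
-/

lemma e_mul_self (l : Fin 3) : e l * e l = 1 := by
  rw [e, CliffordAlgebra.ι_sq_scalar]
  fin_cases l <;> simp [QuadraticMap.weightedSumSquares_apply, Pi.single_apply]

lemma e_mul_e_anticomm {l m : Fin 3} (h : l ≠ m) : e l * e m = -(e m * e l) := by
  have hpolar : QuadraticMap.polar Q3 (Pi.single l 1) (Pi.single m 1) = 0 := by
    simp [QuadraticMap.polar, QuadraticMap.weightedSumSquares_apply, Fin.sum_univ_three,
      Pi.single_apply]
    fin_cases l <;> fin_cases m <;> simp_all
  have := CliffordAlgebra.ι_mul_ι_add_swap (Q := Q3) (Pi.single l 1) (Pi.single m 1)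
  rw [hpolar, map_zero] at this
  exact eq_neg_of_add_eq_zero_left this

lemma e_mul_e_mul_e {a b : Fin 3} (hab : a ≠ b) (c : Fin 3) :
    e a * e b * e c = (if c = a ∨ c = b then -1 else 1 : ℝ) • (e c * (e a * e b)) := by
  by_cases hca : c = a
  · subst hca
    rw [mul_assoc, e_mul_e_anticomm hab.symm, mul_neg]
    simp
  by_cases hcb : c = b
  · subst hcb
    rw [mul_assoc, e_mul_self, mul_one, ← mul_assoc, e_mul_e_anticomm hab.symm, neg_mul,
      mul_assoc, e_mul_self, mul_one]
    simp
  rw [if_neg (by tauto), one_smul, mul_assoc, e_mul_e_anticomm (Ne.symm hcb), mul_neg,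
    ← mul_assoc, e_mul_e_anticomm (Ne.symm hca), neg_mul, neg_neg, mul_assoc]

lemma X_mul_self (l : Fin 3) : X l * X l = 1 := by
  rw [X, Algebra.TensorProduct.tmul_mul_tmul, e_mul_self, Algebra.TensorProduct.one_def]

lemma X_commute (l m : Fin 3) : Commute (X l) (X m) := by
  by_cases h : l = m
  · rw [h]
  · rw [Commute, SemiconjBy, X, X, Algebra.TensorProduct.tmul_mul_tmul,
      Algebra.TensorProduct.tmul_mul_tmul, e_mul_e_anticomm h, TensorProduct.neg_tmul,
      TensorProduct.tmul_neg, neg_neg]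

lemma w_mul_self (l : Fin 3) : w l * w l = -1 := by
  have hne : l + 1 ≠ l + 2 := by fin_cases l <;> decide
  rw [w, Algebra.TensorProduct.tmul_mul_tmul, ← mul_assoc, e_mul_e_mul_e hne, if_pos (.inl rfl),
    neg_one_smul, neg_mul, ← mul_assoc (e _), e_mul_self, one_mul, e_mul_self, mul_one,
    TensorProduct.neg_tmul, Algebra.TensorProduct.one_def]

lemma w_mul_X (l m : Fin 3) : w l * X m = (if l = m then 1 else -1 : ℝ) • (X m * w l) := by
  have hne : l + 1 ≠ l + 2 := by fin_cases l <;> decide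
  have hsign : (if m = l + 1 ∨ m = l + 2 then -1 else 1 : ℝ) = if l = m then 1 else -1 := by
    fin_cases l <;> fin_cases m <;> simp
  rw [w, X, Algebra.TensorProduct.tmul_mul_tmul, Algebra.TensorProduct.tmul_mul_tmul, one_mul,
    mul_one, e_mul_e_mul_e hne, hsign, ← TensorProduct.smul_tmul']

lemma w_mul_mul {l : Fin 3} {U V : A3} {s t : ℝ} (hU : w l * U = s • (U * w l))
    (hV : w l * V = t • (V * w l)) : w l * (U * V) = (s * t) • (U * V * w l) := by
  rw [← mul_assoc, hU, smul_mul_assoc, mul_assoc, hV, mul_smul_comm, smul_smul, mul_assoc]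

lemma J_add (l : Fin 3) (U V : A3) : J l (U + V) = J l U + J l V := by
  simp only [J, mul_add, add_mul, ← smul_add]
  abel_nf

lemma J_smul (l : Fin 3) (c : ℝ) (U : A3) : J l (c • U) = c • J l U := by
  simp only [J, mul_smul_comm, smul_mul_assoc, ← smul_sub, smul_comm c]

lemma K1_add (U V : A3) : K1 (U + V) = K1 U + K1 V := by
  simp only [K1, J_add, add_mul]
  abel

lemma K1_smul (c : ℝ) (U : A3) : K1 (c • U) = c • K1 U := by
  simp only [K1, J_smul, smul_mul_assoc, smul_add]

lemma J_mul_w {l : Fin 3} {U : A3} {s : ℝ} (h : w l * U = s • (U * w l)) :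
    J l U * w l = ((1 - s) / 2) • U := by
  rw [J, smul_mul_assoc, sub_mul, h, smul_mul_assoc]
  simp only [mul_assoc, w_mul_self, mul_neg, mul_one]
  module

lemma K1_eq_smul {U : A3} (s : Fin 3 → ℝ) (h : ∀ l, w l * U = s l • (U * w l)) :
    K1 U = ((3 - (s 0 + s 1 + s 2)) / 2) • U := by
  rw [K1, J_mul_w (h 0), J_mul_w (h 1), J_mul_w (h 2)]
  module

lemma K1_one : K1 1 = 0 := by
  rw [K1_eq_smul (fun _ => 1) (fun l => by rw [one_smul, one_mul, mul_one])]
  norm_num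

lemma K1_X (m : Fin 3) : K1 (X m) = (2 : ℝ) • X m := by
  rw [K1_eq_smul _ (fun l => w_mul_X l m)]
  congr 1
  fin_cases m <;> simp [Fin.ext_iff] <;> norm_num

lemma K1_X_mul_X {m n : Fin 3} (h : m ≠ n) : K1 (X m * X n) = (2 : ℝ) • (X m * X n) := by
  rw [K1_eq_smul _ (fun l => w_mul_mul (w_mul_X l m) (w_mul_X l n))]
  congr 1
  fin_cases m <;> fin_cases n <;> simp_all [Fin.ext_iff] <;> norm_num

lemma K1_X_mul_X_mul_X : K1 (X 0 * X 1 * X 2) = 0 := by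
  rw [K1_eq_smul _ (fun l => w_mul_mul (w_mul_mul (w_mul_X l 0) (w_mul_X l 1)) (w_mul_X l 2))]
  norm_num [Fin.ext_iff]

lemma X_mul_X_mul_X_cyclic (i : Fin 3) : X i * X (i + 1) * X (i + 2) = X 0 * X 1 * X 2 := by
  fin_cases i
  · rfl
  · simp only [Fin.isValue, Fin.reduceAdd, Fin.mk_one]
    rw [((X_commute 1 0).mul_left (X_commute 2 0)).eq, mul_assoc]
  · simp only [Fin.isValue, Fin.reduceAdd, Fin.reduceFinMk]
    rw [mul_assoc, ((X_commute 2 0).mul_right (X_commute 2 1)).eq]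

lemma X_mul_P {δ : ℝ} (hδ : δ * δ = 1) (l : Fin 3) : X l * P l δ = δ • P l δ := by
  rw [P, mul_smul_comm, mul_add, mul_one, mul_smul_comm, X_mul_self]
  linear_combination (norm := module) (-(1 / 2) : ℝ) • hδ • X l

lemma commute_X_Iem (k i j : Fin 3) (ε : ℝ) : Commute (X k) (Iem i j ε) :=
  ((Commute.one_right _).add_right
    (((X_commute k i).mul_right (X_commute k j)).smul_right ε)).smul_right _

lemma Iem_mul_P (i j k : Fin 3) (ε δ : ℝ) :
    Iem i j ε * P k δ =
      (1 / 4 : ℝ) • (1 + ε • (X i * X j) + δ • X k + (ε * δ) • (X i * X j * X k)) := by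
  simp only [Iem, P, smul_mul_smul_comm, add_mul, mul_add, one_mul, mul_one]
  module

theorem stmt12_general (i j k : Fin 3) (hj : j = i + 1) (hk : k = i + 2)
    (ε δ : ℝ) (hδ : δ = 1 ∨ δ = -1) :
    K1 (X k * (Iem i j ε * P k δ)) =
      (2 * δ) • (Iem i j ε * P k δ)
        - (1/2 : ℝ) • (δ • (1 : A3) + ε • (X 0 * X 1 * X 2)) := by
  subst hj hk
  have hδ2 : δ * δ = 1 := by rcases hδ with rfl | rfl <;> norm_num
  have hne : i ≠ i + 1 := by fin_cases i <;> decide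
  rw [← mul_assoc, (commute_X_Iem _ _ _ ε).eq, mul_assoc, X_mul_P hδ2, mul_smul_comm, K1_smul,
    Iem_mul_P, X_mul_X_mul_X_cyclic, K1_smul, K1_add, K1_add, K1_add, K1_smul, K1_smul, K1_smul,
    K1_one, K1_X, K1_X_mul_X hne, K1_X_mul_X_mul_X]
  linear_combination (norm := module) (-(ε / 2) : ℝ) • hδ2 • (X 0 * X 1 * X 2)

/-- For each cyclic permutation `(i,j,k)` and signs `ε, δ`:
`(K+1)(X_k I_{ij}^ε P_k^δ) = 2δ I_{ij}^ε P_k^δ − (1/2)(δ + ε X₁X₂X₃)`. -/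
theorem stmt12 (i j k : Fin 3) (hj : j = i + 1) (hk : k = i + 2)
    (ε δ : ℝ) (hε : ε = 1 ∨ ε = -1) (hδ : δ = 1 ∨ δ = -1) :
    K1 (X k * (Iem i j ε * P k δ)) =
      (2 * δ) • (Iem i j ε * P k δ)
        - (1/2 : ℝ) • (δ • (1 : A3) + ε • (X 0 * X 1 * X 2)) :=
  stmt12_general i j k hj hk ε δ hδ
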